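/- arXiv:2508.03192 — 2 statements merged into one kernel-verified Lean document; each statement's English description precedes it below -/
import Mathlib

section
/- Let ρ, A, B, H be n×n complex matrices with B Hermitian and B·B = I, and let t be a real number. Set A(t) := exp(i·t·H)·A·exp(−i·t·H). Then tr(ρ·[A(t),B]) = −i · ( 2·tr( exp(−i·t·H)·exp(i·(π/4)·B)·ρ·exp(−i·(π/4)·B)·exp(i·t·H)·A ) − tr( exp(−i·t·H)·ρ·exp(i·t·H)·A ) − tr( exp(−i·t·H)·B·ρ·B·exp(i·t·H)·A ) ). -/
open Matrix Complex NormedSpace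

/-!
Since `B * B = 1`, the exponential series gives `exp (i θ B) = cos θ + i sin θ B`, so at `θ = π / 4`
conjugation by `exp (i π B / 4)` sends `ρ` to `(ρ + BρB) / 2 + (i / 2) [B, ρ]`. The combination on the
right therefore equals `-i · tr (e^{-iHt} · i [B, ρ] · e^{iHt} A)`, and cyclicity of the trace turns this
into `tr (ρ [A(t), B])`.
-/

namespace NormedSpace

variable {𝔸 : Type*} [Ring 𝔸] [Algebra ℂ 𝔸] [TopologicalSpace 𝔸] [IsTopologicalRing 𝔸]
  [T2Space 𝔸] [ContinuousSMul ℂ 𝔸] {b : 𝔸}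

theorem exp_smul_eq_cosh_add_sinh_of_mul_self_eq_one (hb : b * b = 1) (z : ℂ) :
    exp (z • b) = cosh z • (1 : 𝔸) + sinh z • b := by
  have hb_even (k : ℕ) : b ^ (2 * k) = 1 := by rw [pow_mul, sq, hb, one_pow]
  have hb_odd (k : ℕ) : b ^ (2 * k + 1) = b := by rw [pow_succ, hb_even, one_mul]
  rw [exp_eq_tsum ℂ]
  refine (HasSum.even_add_odd ?_ ?_).tsum_eq
  · convert (hasSum_cosh z).smul_const (1 : 𝔸) using 2 with k
    rw [smul_pow, hb_even, smul_smul, div_eq_inv_mul]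
  · convert (hasSum_sinh z).smul_const b using 2 with k
    rw [smul_pow, hb_odd, smul_smul, div_eq_inv_mul]

theorem exp_I_mul_smul_eq_cos_add_sin_of_mul_self_eq_one (hb : b * b = 1) (θ : ℂ) :
    exp ((I * θ) • b) = cos θ • (1 : 𝔸) + (I * sin θ) • b := by
  rw [exp_smul_eq_cosh_add_sinh_of_mul_self_eq_one hb, mul_comm I θ, cosh_mul_I, sinh_mul_I,
    mul_comm]

theorem exp_pi_div_four_conj_of_mul_self_eq_one (hb : b * b = 1) (ρ : 𝔸) :
    exp ((I * (Real.pi / 4 : ℂ)) • b) * ρ * exp ((-(I * (Real.pi / 4 : ℂ))) • b) =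
      (1 / 2 : ℂ) • (ρ + b * ρ * b) + (I / 2) • (b * ρ - ρ * b) := by
  have hcos : cos (Real.pi / 4 : ℂ) = (√2 / 2 : ℝ) := by
    rw [← Real.cos_pi_div_four]; push_cast; rfl
  have hsin : sin (Real.pi / 4 : ℂ) = (√2 / 2 : ℝ) := by
    rw [← Real.sin_pi_div_four]; push_cast; rfl
  have hc : ((√2 / 2 : ℝ) : ℂ) * (√2 / 2 : ℝ) = 1 / 2 := by
    norm_cast; rw [div_mul_div_comm, Real.mul_self_sqrt zero_le_two]; norm_num
  set c : ℂ := ((√2 / 2 : ℝ) : ℂ)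
  rw [← mul_neg, exp_I_mul_smul_eq_cos_add_sin_of_mul_self_eq_one hb,
    exp_I_mul_smul_eq_cos_add_sin_of_mul_self_eq_one hb, cos_neg, sin_neg, hcos, hsin]
  simp only [add_mul, mul_add, smul_mul_assoc, mul_smul_comm, one_mul, mul_one]
  linear_combination (norm := module) hc • (ρ + b * ρ * b) + (I * hc) • (b * ρ - ρ * b) +
    (-(c * c) * I_sq) • (b * ρ * b)

end NormedSpace

theorem Matrix.trace_mul_commutator {m R : Type*} [Fintype m] [CommRing R]
    (ρ X B : Matrix m m R) : trace (ρ * (X * B - B * X)) = trace ((B * ρ - ρ * B) * X) := by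
  rw [mul_sub, sub_mul, trace_sub, trace_sub, ← Matrix.mul_assoc, trace_mul_comm (ρ * X),
    ← Matrix.mul_assoc, Matrix.mul_assoc ρ]

theorem commutator_measurable_representation_general {n : ℕ}
    (ρ A B H : Matrix (Fin n) (Fin n) ℂ)
    (hB2 : B * B = 1) (t : ℝ) :
    Matrix.trace (ρ *
        ((NormedSpace.exp ((Complex.I * (t : ℂ)) • H) * A * NormedSpace.exp ((-(Complex.I * (t : ℂ))) • H)) * B
          - B * (NormedSpace.exp ((Complex.I * (t : ℂ)) • H) * A * NormedSpace.exp ((-(Complex.I * (t : ℂ))) • H)))) =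
      (-Complex.I) *
        (2 * Matrix.trace
            (NormedSpace.exp ((-(Complex.I * (t : ℂ))) • H) *
              NormedSpace.exp ((Complex.I * ((Real.pi : ℂ) / 4)) • B) * ρ *
              NormedSpace.exp ((-(Complex.I * ((Real.pi : ℂ) / 4))) • B) *
              NormedSpace.exp ((Complex.I * (t : ℂ)) • H) * A)
          - Matrix.trace
              (NormedSpace.exp ((-(Complex.I * (t : ℂ))) • H) * ρ * NormedSpace.exp ((Complex.I * (t : ℂ)) • H) * A)
          - Matrix.trace
              (NormedSpace.exp ((-(Complex.I * (t : ℂ))) • H) * B * ρ * B *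
                NormedSpace.exp ((Complex.I * (t : ℂ)) • H) * A)) := by
  set U := exp ((I * (t : ℂ)) • H)
  set V := exp ((-(I * (t : ℂ))) • H)
  set E := exp ((I * (Real.pi / 4 : ℂ)) • B)
  set F := exp ((-(I * (Real.pi / 4 : ℂ))) • B)
  have hconj : E * ρ * F = (1 / 2 : ℂ) • (ρ + B * ρ * B) + (I / 2) • (B * ρ - ρ * B) :=
    exp_pi_div_four_conj_of_mul_self_eq_one hB2 ρ
  have hcyc (M : Matrix (Fin n) (Fin n) ℂ) : trace (V * M * U * A) = trace (M * (U * A * V)) := by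
    rw [Matrix.mul_assoc, Matrix.mul_assoc, trace_mul_comm, Matrix.mul_assoc, Matrix.mul_assoc]
  rw [Matrix.mul_assoc V E, Matrix.mul_assoc V (E * ρ), Matrix.mul_assoc V B,
    Matrix.mul_assoc V (B * ρ), hcyc, hcyc, hcyc, trace_mul_commutator, hconj]
  simp only [add_mul, sub_mul, smul_mul, trace_add, trace_sub, trace_smul, smul_eq_mul]
  linear_combination (trace (B * ρ * (U * A * V)) - trace (ρ * B * (U * A * V))) * I_sq

/-- Measurable representation of the commutator correlation function. -/
theorem commutator_measurable_representation {n : ℕ} (hn : 1 ≤ n)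
    (ρ A B H : Matrix (Fin n) (Fin n) ℂ) (hB : Bᴴ = B)
    (hB2 : B * B = 1) (t : ℝ) :
    Matrix.trace (ρ *
        ((NormedSpace.exp ((Complex.I * (t : ℂ)) • H) * A * NormedSpace.exp ((-(Complex.I * (t : ℂ))) • H)) * B
          - B * (NormedSpace.exp ((Complex.I * (t : ℂ)) • H) * A * NormedSpace.exp ((-(Complex.I * (t : ℂ))) • H)))) =
      (-Complex.I) *
        (2 * Matrix.trace
            (NormedSpace.exp ((-(Complex.I * (t : ℂ))) • H) *
              NormedSpace.exp ((Complex.I * ((Real.pi : ℂ) / 4)) • B) * ρ *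
              NormedSpace.exp ((-(Complex.I * ((Real.pi : ℂ) / 4))) • B) *
              NormedSpace.exp ((Complex.I * (t : ℂ)) • H) * A)
          - Matrix.trace
              (NormedSpace.exp ((-(Complex.I * (t : ℂ))) • H) * ρ * NormedSpace.exp ((Complex.I * (t : ℂ)) • H) * A)
          - Matrix.trace
              (NormedSpace.exp ((-(Complex.I * (t : ℂ))) • H) * B * ρ * B *
                NormedSpace.exp ((Complex.I * (t : ℂ)) • H) * A)) :=
  commutator_measurable_representation_general ρ A B H hB2 t
end

section
/- Let ε > 0 and let P₀, …, P_{m−1} be n×n complex matrices that are Hermitian (Pᵢᴴ = Pᵢ), satisfy Pᵢ·Pᵢ = I, and pairwise anticommute (Pᵢ·Pⱼ = −Pⱼ·Pᵢ for i ≠ j). Let ρ be an n×n positive semidefinite Hermitian matrix with tr ρ = 1, and suppose |tr(ρ·Pᵢ)| ≥ ε/2 for every i. Then m ≤ 4/ε². -/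
open Matrix ComplexOrder

/-!
Write `tᵢ = tr(ρ Pᵢ)`, which is real because `ρ` and `Pᵢ` are Hermitian. Anticommutation kills
the cross terms of `M = ∑ tᵢ Pᵢ`, so `M² = S • 1` with `S = ∑ tᵢ²`, and then `tr(ρ M) = S` and
`tr(ρ M²) = S`. The variance `tr(ρ M²) - tr(ρ M)²` of the observable `M` is nonnegative, so
`S² ≤ S`, i.e. `S ≤ 1`; on the other hand every `tᵢ² ≥ ε²/4`.
-/

section Anticommuting

variable {ι R A : Type*} [CommRing R] [Ring A] [Algebra R A]

theorem mul_sum_smul_of_anticommute {P : ι → A} (c : ι → R) {s : Finset ι} {k : ι} (hk : k ∉ s)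
    (hanti : ∀ i j, i ≠ j → P i * P j = -(P j * P i)) :
    P k * ∑ i ∈ s, c i • P i = -((∑ i ∈ s, c i • P i) * P k) := by
  rw [Finset.mul_sum, Finset.sum_mul, ← Finset.sum_neg_distrib]
  refine Finset.sum_congr rfl fun i hi => ?_
  rw [mul_smul_comm, smul_mul_assoc, hanti k i (ne_of_mem_of_not_mem hi hk).symm, smul_neg]

theorem sum_smul_mul_self_of_anticommute {P : ι → A} (c : ι → R) (s : Finset ι)
    (hsq : ∀ i, P i * P i = 1) (hanti : ∀ i j, i ≠ j → P i * P j = -(P j * P i)) :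
    (∑ i ∈ s, c i • P i) * (∑ i ∈ s, c i • P i) = (∑ i ∈ s, c i ^ 2) • (1 : A) := by
  classical
  induction s using Finset.induction_on with
  | empty => simp
  | insert k s hk ih =>
    have hcross := mul_sum_smul_of_anticommute c hk hanti
    rw [Finset.sum_insert hk, Finset.sum_insert hk, add_smul, ← ih]
    simp only [add_mul, mul_add, smul_mul_assoc, mul_smul_comm, hsq, hcross]
    module

end Anticommuting

section Trace

variable {n R : Type*} [Fintype n]

theorem Matrix.IsHermitian.star_trace_mul [CommSemiring R] [StarRing R] {A B : Matrix n n R}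
    (hA : A.IsHermitian) (hB : B.IsHermitian) : star (trace (A * B)) = trace (A * B) := by
  rw [← trace_conjTranspose, conjTranspose_mul, hA.eq, hB.eq, trace_mul_comm]

theorem Matrix.PosSemidef.trace_mul_sq_le_trace_mul_mul_self [CommRing R] [PartialOrder R]
    [StarRing R] [StarOrderedRing R] {ρ M : Matrix n n R} (hρ : ρ.PosSemidef) (hρtr : trace ρ = 1)
    (hM : M.IsHermitian) : trace (ρ * M) ^ 2 ≤ trace (ρ * (M * M)) := by
  classical
  set a := trace (ρ * M)
  -- No need to know that `a` is real: the cross terms `-a² - (star a) a + (star a) a` sum to `-a²`.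
  have hvar := (hρ.mul_mul_conjTranspose_same (M - a • 1)).trace_nonneg
  have hexp : trace ((M - a • 1) * ρ * (M - a • 1)ᴴ) = trace (ρ * (M * M)) - a ^ 2 := by
    rw [trace_mul_cycle, conjTranspose_sub, hM.eq, conjTranspose_smul, conjTranspose_one,
      trace_mul_comm]
    simp only [sub_mul, mul_sub, Matrix.smul_mul, Matrix.mul_smul, Matrix.mul_one, one_mul,
      trace_sub, trace_smul, hρtr, smul_eq_mul]
    ring
  rwa [hexp, sub_nonneg] at hvar

end Trace

theorem sum_norm_trace_mul_sq_le_one {ι n : Type*} [Fintype ι] [Fintype n] [DecidableEq n]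
    {P : ι → Matrix n n ℂ} (hHerm : ∀ i, (P i).IsHermitian) (hsq : ∀ i, P i * P i = 1)
    (hanti : ∀ i j, i ≠ j → P i * P j = -(P j * P i)) {ρ : Matrix n n ℂ} (hρ : ρ.PosSemidef)
    (hρtr : trace ρ = 1) : ∑ i, ‖trace (ρ * P i)‖ ^ 2 ≤ 1 := by
  set t : ι → ℝ := fun i => (trace (ρ * P i)).re
  have ht (i : ι) : trace (ρ * P i) = t i :=
    (Complex.conj_eq_iff_re.mp (hρ.isHermitian.star_trace_mul (hHerm i))).symm
  simp only [ht, Complex.norm_real, Real.norm_eq_abs, sq_abs]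
  set S := ∑ i, t i ^ 2
  set M := ∑ i, t i • P i
  have hM : M.IsHermitian := isSelfAdjoint_sum _ fun i _ => (hHerm i).smul (IsSelfAdjoint.all (t i))
  have hMM : M * M = S • 1 := sum_smul_mul_self_of_anticommute t _ hsq hanti
  have htrM : trace (ρ * M) = S := by
    simp only [M, S, Finset.mul_sum, Matrix.mul_smul, trace_sum, trace_smul, ht]
    push_cast
    simp only [Complex.real_smul, sq]
  have hvar := hρ.trace_mul_sq_le_trace_mul_mul_self hρtr hM
  rw [hMM, Matrix.mul_smul, Matrix.mul_one, trace_smul, hρtr, htrM, Complex.real_smul,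
    mul_one] at hvar
  have hS : S ^ 2 ≤ S := by exact_mod_cast hvar
  nlinarith [Finset.sum_nonneg fun i (_ : i ∈ Finset.univ) => sq_nonneg (t i)]

/-- Clique-size bound: at most 4/ε² pairwise anticommuting Hermitian unitary
observables can each have expectation magnitude at least ε/2 in a density matrix ρ. -/
theorem anticommuting_clique_size_bound {n m : ℕ} (ε : ℝ) (hε : 0 < ε)
    (P : Fin m → Matrix (Fin n) (Fin n) ℂ)
    (hHerm : ∀ i, (P i)ᴴ = P i)
    (hUnit : ∀ i, P i * P i = 1)
    (hanti : ∀ i j : Fin m, i ≠ j → P i * P j = -(P j * P i))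
    (ρ : Matrix (Fin n) (Fin n) ℂ) (hρ : ρ.PosSemidef) (hρtr : Matrix.trace ρ = 1)
    (hbig : ∀ i, ε / 2 ≤ ‖Matrix.trace (ρ * P i)‖) :
    (m : ℝ) ≤ 4 / ε ^ 2 := by
  have hlow : (m : ℝ) * (ε / 2) ^ 2 ≤ ∑ i, ‖trace (ρ * P i)‖ ^ 2 := by
    simpa using Finset.card_nsmul_le_sum Finset.univ (fun i => ‖trace (ρ * P i)‖ ^ 2) _
      fun i _ => pow_le_pow_left₀ (by positivity) (hbig i) 2
  have hup := sum_norm_trace_mul_sq_le_one hHerm hUnit hanti hρ hρtr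
  rw [le_div_iff₀ (by positivity)]
  nlinarith
end
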